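/- arXiv:1812.08006 — 6 statements merged into one kernel-verified Lean document; each statement's English description precedes it below -/
import Mathlib

section
/- Let n ≥ 1 and 0 ≤ m ≤ n be integers and let p_{jk} (1 ≤ j,k ≤ n) be real numbers satisfying (H3). For each j ≤ n set x_j = 0 if 1 ≤ j ≤ m and x_j = 1 if m < j ≤ n. Let γ_j : [0,1]×ℝ → ℝ and τ_j : [0,1]×ℝ → ℝ (1 ≤ j ≤ n) be arbitrary functions. Define the operator R taking a function u : [0,1]×ℝ → ℝⁿ to Ru : ℝ → ℝⁿ by (Ru)_j(t) = Σ_{k=m+1}^n p_{jk} u_k(0,t) + Σ_{k=1}^m p_{jk} u_k(1,t), and the operator S taking a function v : ℝ → ℝⁿ to Sv : [0,1]×ℝ → ℝⁿ by (Sv)_j(x,t) = γ_j(x,t) · v_j(τ_j(x,t)). Then (SR)ⁿ u is identically zero for every u : [0,1]×ℝ → ℝⁿ. -/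
/-!
Hypothesis (H3) says that the directed graph with an edge `j → k` whenever `p j k ≠ 0` has no
path of length `n`. The `j`-th component of `S (R w)` only involves the components `w k` with
`p j k ≠ 0`, so by induction on `N` the `j`-th component of `(S ∘ R)^[N] w` vanishes whenever
no path of length `N` starts at `j`.
-/

section Paths

variable {ι R : Type*} [CommMonoidWithZero R]

def pathWeight (p : ι → ι → R) {N : ℕ} (i : Fin (N + 1) → ι) : R :=
  ∏ l : Fin N, p (i l.castSucc) (i l.succ)

lemma pathWeight_cons (p : ι → ι → R) {N : ℕ} (j : ι) (i : Fin (N + 1) → ι) :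
    pathWeight p (Fin.cons j i : Fin (N + 2) → ι) = p j (i 0) * pathWeight p i := by
  simp only [pathWeight, Fin.prod_univ_succ, ← Fin.succ_castSucc, Fin.cons_succ]
  rfl

def NoPathFrom (p : ι → ι → R) (N : ℕ) (j : ι) : Prop :=
  ∀ i : Fin (N + 1) → ι, i 0 = j → pathWeight p i = 0

lemma not_noPathFrom_zero [Nontrivial R] (p : ι → ι → R) (j : ι) : ¬ NoPathFrom p 0 j :=
  fun h => one_ne_zero (h (fun _ => j) rfl)

lemma NoPathFrom.of_succ [NoZeroDivisors R] {p : ι → ι → R} {N : ℕ} {j k : ι}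
    (h : NoPathFrom p (N + 1) j) (hjk : p j k ≠ 0) : NoPathFrom p N k := by
  intro i hi
  have := h (Fin.cons j i) rfl
  rw [pathWeight_cons, hi] at this
  exact (mul_eq_zero.mp this).resolve_left hjk

end Paths

section Propagation

variable {ι R X Y M : Type*} [CommMonoidWithZero R] [Zero M]

def Propagates (p : ι → ι → R) (T : (X → Y → ι → M) → (X → Y → ι → M)) : Prop :=
  ∀ w j, (∀ k, p j k ≠ 0 → ∀ x y, w x y k = 0) → ∀ x y, T w x y j = 0

lemma Propagates.iterate_apply_eq_zero [NoZeroDivisors R] [Nontrivial R] {p : ι → ι → R}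
    {T : (X → Y → ι → M) → (X → Y → ι → M)} (hT : Propagates p T) :
    ∀ {N : ℕ} {j : ι}, NoPathFrom p N j → ∀ w x y, T^[N] w x y j = 0
  | 0, j, h => absurd h (not_noPathFrom_zero p j)
  | N + 1, _, h => fun w => by
    rw [Function.iterate_succ']
    exact hT _ _ fun _ hjk => hT.iterate_apply_eq_zero (h.of_succ hjk) w

end Propagation

lemma propagates_comp_boundary {n m : ℕ} (p : Fin n → Fin n → ℝ) (γ τ : Fin n → ℝ → ℝ → ℝ)
    (R : (ℝ → ℝ → Fin n → ℝ) → (ℝ → Fin n → ℝ))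
    (S : (ℝ → Fin n → ℝ) → (ℝ → ℝ → Fin n → ℝ))
    (hR : ∀ (u : ℝ → ℝ → Fin n → ℝ) (t : ℝ) (j : Fin n),
      R u t j = ∑ k : Fin n,
        if m ≤ (k : ℕ) then p j k * u 0 t k else p j k * u 1 t k)
    (hS : ∀ (v : ℝ → Fin n → ℝ) (x t : ℝ) (j : Fin n),
      S v x t j = γ j x t * v (τ j x t) j) :
    Propagates p (S ∘ R) := by
  intro w j hw x t
  rw [Function.comp_apply, hS, hR, Finset.sum_eq_zero, mul_zero]
  intro k _
  by_cases hjk : p j k = 0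
  · simp [hjk]
  · simp [hw k hjk]

theorem stmt_10_general (n m : ℕ)
    (p : Fin n → Fin n → ℝ)
    (hH3 : ∀ i : Fin (n + 1) → Fin n, ∏ l : Fin n, p (i l.castSucc) (i l.succ) = 0)
    (γ τ : Fin n → ℝ → ℝ → ℝ)
    (R : (ℝ → ℝ → Fin n → ℝ) → (ℝ → Fin n → ℝ))
    (S : (ℝ → Fin n → ℝ) → (ℝ → ℝ → Fin n → ℝ))
    (hR : ∀ (u : ℝ → ℝ → Fin n → ℝ) (t : ℝ) (j : Fin n),
      R u t j = ∑ k : Fin n,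
        if m ≤ (k : ℕ) then p j k * u 0 t k else p j k * u 1 t k)
    (hS : ∀ (v : ℝ → Fin n → ℝ) (x t : ℝ) (j : Fin n),
      S v x t j = γ j x t * v (τ j x t) j)
    (u : ℝ → ℝ → Fin n → ℝ) :
    ∀ (x t : ℝ) (j : Fin n), (S ∘ R)^[n] u x t j = 0 := by
  intro x t j
  exact (propagates_comp_boundary p γ τ R S hR hS).iterate_apply_eq_zero
    (fun i _ => hH3 i) u x t

theorem stmt_10 (n m : ℕ) (hn : 1 ≤ n) (hmn : m ≤ n)
    (p : Fin n → Fin n → ℝ)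
    (hH3 : ∀ i : Fin (n + 1) → Fin n, ∏ l : Fin n, p (i l.castSucc) (i l.succ) = 0)
    (γ τ : Fin n → ℝ → ℝ → ℝ)
    (R : (ℝ → ℝ → Fin n → ℝ) → (ℝ → Fin n → ℝ))
    (S : (ℝ → Fin n → ℝ) → (ℝ → ℝ → Fin n → ℝ))
    (hR : ∀ (u : ℝ → ℝ → Fin n → ℝ) (t : ℝ) (j : Fin n),
      R u t j = ∑ k : Fin n,
        if m ≤ (k : ℕ) then p j k * u 0 t k else p j k * u 1 t k)
    (hS : ∀ (v : ℝ → Fin n → ℝ) (x t : ℝ) (j : Fin n),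
      S v x t j = γ j x t * v (τ j x t) j)
    (u : ℝ → ℝ → Fin n → ℝ) :
    ∀ (x t : ℝ) (j : Fin n), (S ∘ R)^[n] u x t j = 0 :=
  stmt_10_general n m p hH3 γ τ R S hR hS u
end

section
/- Let n ≥ 1 and let p be an n×n real matrix with entries p_{jk}, and let W be the n×n matrix with entries w_{jk} = |p_{jk}|. Then the trace of W + W² + ⋯ + Wⁿ equals 0 if and only if p_{i₁i₂} p_{i₂i₃} ⋯ p_{iₙ i_{n+1}} = 0 for every tuple (i₁,…,i_{n+1}) ∈ {1,…,n}^{n+1}. -/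
/-!
Put `W = (|p_{jk}|)`. Since `W ≥ 0`, `(W ^ m)_{ab}` dominates the weight of every walk of length
`m` from `a` to `b` and is nonzero only if some such walk has nonzero weight; so the products in
the statement all vanish iff `W ^ n = 0`. If `W ^ n = 0` the powers of `W` are nilpotent and have
zero trace. Conversely, the trace of the nonnegative sum vanishes iff no closed walk of length
`1 ≤ m ≤ n` has positive weight, and by pigeonhole every walk through `n + 1` vertices of an
`n`-element set contains such a closed walk.
-/

open Finset

namespace Matrix

variable {ι R : Type*}

def walkProd [CommMonoid R] (M : Matrix ι ι R) {k : ℕ} (f : Fin (k + 1) → ι) : R :=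
  ∏ l : Fin k, M (f l.castSucc) (f l.succ)

lemma walkProd_succ [CommMonoid R] (M : Matrix ι ι R) {k : ℕ} (f : Fin (k + 2) → ι) :
    M.walkProd f =
      M.walkProd (fun l => f l.castSucc) * M (f (Fin.last k).castSucc) (f (Fin.last (k + 1))) := by
  simp only [walkProd, Fin.prod_univ_castSucc, Fin.succ_castSucc, Fin.succ_last]

lemma walkProd_nonneg [CommSemiring R] [PartialOrder R] [IsOrderedRing R] {M : Matrix ι ι R}
    (hM : ∀ i j, 0 ≤ M i j) {k : ℕ} (f : Fin (k + 1) → ι) : 0 ≤ M.walkProd f :=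
  prod_nonneg fun _ _ => hM _ _

lemma walkProd_abs [CommRing R] [LinearOrder R] [IsStrictOrderedRing R] (M : Matrix ι ι R)
    {k : ℕ} (f : Fin (k + 1) → ι) :
    (of fun i j => |M i j|).walkProd f = |M.walkProd f| := by
  simp [walkProd, abs_prod]

variable [Fintype ι]

/-- Pigeonhole: a walk visiting more than `card ι` vertices passes twice through some vertex,
and the part in between is a closed walk made of steps of the original one. -/
lemma exists_closed_walkProd_ne_zero [CommMonoidWithZero R] [NoZeroDivisors R] [Nontrivial R]
    {M : Matrix ι ι R} {k : ℕ} (hk : Fintype.card ι ≤ k) {f : Fin (k + 1) → ι}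
    (hf : M.walkProd f ≠ 0) :
    ∃ m, 0 < m ∧ m ≤ k ∧ ∃ g : Fin (m + 1) → ι, g 0 = g (Fin.last m) ∧ M.walkProd g ≠ 0 := by
  obtain ⟨a, b, hab, hfab⟩ :=
    Fintype.exists_ne_map_eq_of_card_lt f (by simpa using hk.trans_lt k.lt_succ_self)
  wlog hlt : a < b generalizing a b
  · exact this b a hab.symm hfab.symm ((Ne.symm hab).lt_of_le (not_lt.mp hlt))
  refine ⟨b - a, by omega, by omega, fun l => f ⟨a + l, by omega⟩, ?_, ?_⟩
  · simpa [Nat.add_sub_cancel' hlt.le] using hfab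
  · rw [walkProd, prod_ne_zero_iff] at hf ⊢
    exact fun l _ => hf ⟨a + l, by omega⟩ (mem_univ _)

variable [DecidableEq ι]

lemma walkProd_le_pow_apply [CommSemiring R] [PartialOrder R] [IsOrderedRing R]
    {M : Matrix ι ι R} (hM : ∀ i j, 0 ≤ M i j) {k : ℕ} (f : Fin (k + 1) → ι) :
    M.walkProd f ≤ (M ^ k) (f 0) (f (Fin.last k)) := by
  induction k with
  | zero => simp [walkProd]
  | succ k ih =>
    rw [walkProd_succ, pow_succ, mul_apply]
    calc _ ≤ (M ^ k) (f 0) (f (Fin.last k).castSucc) *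
            M (f (Fin.last k).castSucc) (f (Fin.last (k + 1))) :=
          mul_le_mul_of_nonneg_right (by simpa using ih fun l => f l.castSucc) (hM _ _)
      _ ≤ _ := single_le_sum (fun c _ => mul_nonneg (pow_apply_nonneg hM k _ c) (hM c _))
          (mem_univ _)

lemma exists_walkProd_ne_zero_of_pow_apply_ne_zero [CommSemiring R] [NoZeroDivisors R]
    (M : Matrix ι ι R) {k : ℕ} {i j : ι} (h : (M ^ k) i j ≠ 0) :
    ∃ f : Fin (k + 1) → ι, f 0 = i ∧ f (Fin.last k) = j ∧ M.walkProd f ≠ 0 := by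
  induction k generalizing j with
  | zero =>
    obtain rfl : i = j := by by_contra hij; simp [one_apply_ne hij] at h
    exact ⟨fun _ => i, rfl, rfl, by simpa [walkProd] using h⟩
  | succ k ih =>
    rw [pow_succ, mul_apply] at h
    obtain ⟨c, -, hc⟩ := exists_ne_zero_of_sum_ne_zero h
    obtain ⟨g, hg0, hgc, hg⟩ := ih (left_ne_zero_of_mul hc)
    refine ⟨Fin.snoc g j, by simpa using hg0, by simp, ?_⟩
    rw [walkProd_succ]
    simpa [hgc] using mul_ne_zero_iff.mpr ⟨hg, right_ne_zero_of_mul hc⟩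

lemma pow_eq_zero_iff_forall_walkProd_eq_zero [CommSemiring R] [PartialOrder R] [IsOrderedRing R]
    [NoZeroDivisors R] {M : Matrix ι ι R} (hM : ∀ i j, 0 ≤ M i j) {k : ℕ} :
    M ^ k = 0 ↔ ∀ f : Fin (k + 1) → ι, M.walkProd f = 0 := by
  refine ⟨fun h f => le_antisymm ?_ (walkProd_nonneg hM f), fun h => ?_⟩
  · simpa [h] using walkProd_le_pow_apply hM f
  · ext i j
    by_contra hij
    obtain ⟨f, -, -, hf⟩ := exists_walkProd_ne_zero_of_pow_apply_ne_zero M hij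
    exact hf (h f)

theorem trace_sum_pow_eq_zero_iff_pow_card_eq_zero [CommRing R] [LinearOrder R]
    [IsStrictOrderedRing R] {M : Matrix ι ι R} (hM : ∀ i j, 0 ≤ M i j) :
    trace (∑ k ∈ range (Fintype.card ι), M ^ (k + 1)) = 0 ↔ M ^ Fintype.card ι = 0 := by
  have htrace_nonneg (m : ℕ) : 0 ≤ trace (M ^ m) :=
    sum_nonneg fun a _ => pow_apply_nonneg hM m a a
  rw [trace_sum, sum_eq_zero_iff_of_nonneg fun k _ => htrace_nonneg (k + 1)]
  refine ⟨fun h => (pow_eq_zero_iff_forall_walkProd_eq_zero hM).mpr fun f => ?_, fun h k _ => ?_⟩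
  · by_contra hf
    obtain ⟨m, hm_pos, hm_le, g, hg, hgne⟩ := exists_closed_walkProd_ne_zero le_rfl hf
    have htrace : trace (M ^ m) = 0 := by
      simpa [Nat.sub_add_cancel hm_pos] using h (m - 1) (mem_range.mpr (by omega))
    have := calc
      0 < M.walkProd g := (walkProd_nonneg hM g).lt_of_ne' hgne
      _ ≤ (M ^ m) (g 0) (g 0) := hg ▸ walkProd_le_pow_apply hM g
      _ ≤ trace (M ^ m) := single_le_sum (fun a _ => pow_apply_nonneg hM m a a) (mem_univ _)
    exact this.ne' htrace
  · exact (isNilpotent_trace_of_isNilpotent (IsNilpotent.pow_succ k ⟨_, h⟩)).eq_zero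

end Matrix

open Matrix

theorem stmt_11_general (n : ℕ) (p : Matrix (Fin n) (Fin n) ℝ) :
    Matrix.trace (∑ k ∈ Finset.range n, (Matrix.of fun j k => |p j k|) ^ (k + 1)) = 0 ↔
    ∀ i : Fin (n + 1) → Fin n, ∏ l : Fin n, p (i l.castSucc) (i l.succ) = 0 := by
  have hW : ∀ j k, 0 ≤ (of fun j k => |p j k|) j k := fun _ _ => abs_nonneg _
  have key := trace_sum_pow_eq_zero_iff_pow_card_eq_zero hW
  rw [Fintype.card_fin] at key
  rw [key, pow_eq_zero_iff_forall_walkProd_eq_zero hW]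
  exact forall_congr' fun i => by rw [walkProd_abs, abs_eq_zero]; rfl

theorem stmt_11 (n : ℕ) (hn : 1 ≤ n) (p : Matrix (Fin n) (Fin n) ℝ) :
    Matrix.trace (∑ k ∈ Finset.range n, (Matrix.of fun j k => |p j k|) ^ (k + 1)) = 0 ↔
    ∀ i : Fin (n + 1) → Fin n, ∏ l : Fin n, p (i l.castSucc) (i l.succ) = 0 :=
  stmt_11_general n p
end

section
/- Let Λ₀ > 0, let a : [0,1]×ℝ → ℝ be continuously differentiable with ‖a‖_{BC¹} := sup_{[0,1]×ℝ}(|a| + |∂_x a| + |∂_t a|) < ∞ and |a(x,t)| ≥ Λ₀ for all (x,t), and let ã : [0,1]×ℝ → ℝ be continuous and bounded with |a(x,t) + ã(x,t)| ≥ Λ₀ for all (x,t); set ‖ã‖ := sup |ã|. Fix x ∈ [0,1] and t ∈ ℝ, and let ω, ω̃ : [0,1] → ℝ be differentiable functions satisfying ω′(ξ) = 1/a(ξ, ω(ξ)) and ω̃′(ξ) = 1/(a(ξ, ω̃(ξ)) + ã(ξ, ω̃(ξ))) for all ξ ∈ [0,1], with ω(x) = ω̃(x) = t. Then for every η ∈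 [0,1], |ω(η) − ω̃(η)| ≤ (1/Λ₀²) ‖ã‖ exp(|η − x| ‖a‖_{BC¹} / Λ₀²). -/
/-!
The difference `ω - ω̃` vanishes at `x`, and its derivative `1/a(ξ, ω) - 1/(a + ã)(ξ, ω̃)` is
bounded by `(‖a‖_{BC¹} |ω - ω̃| + ‖ã‖) / Λ₀²`: the speeds are bounded below by `Λ₀`, and
`a(ξ, ·)` is `‖a‖_{BC¹}`-Lipschitz. Grönwall's inequality, run forwards or backwards from `x`,
then bounds `|ω - ω̃|` by `gronwallBound 0 K ε |η - x| ≤ ε |η - x| exp (K |η - x|)`.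
-/

open Set Real

theorem exp_sub_one_le_mul_exp (y : ℝ) : exp y - 1 ≤ y * exp y := by
  calc exp y - 1 = exp y - exp (-y) * exp y := by rw [← exp_add, neg_add_cancel, exp_zero]
    _ ≤ exp y - (-y + 1) * exp y := by gcongr; exact add_one_le_exp _
    _ = y * exp y := by ring

theorem gronwallBound_zero_le {K ε : ℝ} (hK : 0 ≤ K) (hε : 0 ≤ ε) (x : ℝ) :
    gronwallBound 0 K ε x ≤ ε * x * exp (K * x) := by
  rcases hK.eq_or_lt with rfl | hK
  · simp [gronwallBound_K0]
  simp only [gronwallBound_of_K_ne_0 hK.ne', zero_mul, zero_add]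
  rw [div_mul_eq_mul_div, div_le_iff₀ hK]
  calc ε * (exp (K * x) - 1) ≤ ε * (K * x * exp (K * x)) := by
        gcongr; exact exp_sub_one_le_mul_exp _
    _ = ε * x * exp (K * x) * K := by ring

section Gronwall

variable {E : Type*} [NormedAddCommGroup E] [NormedSpace ℝ E]
  {f f' : ℝ → E} {a b x δ K ε : ℝ}

theorem norm_le_gronwallBound_of_hasDerivWithinAt_Icc_of_le
    (hf : ∀ ξ ∈ Icc a b, HasDerivWithinAt f (f' ξ) (Icc a b) ξ)
    (bound : ∀ ξ ∈ Icc a b, ‖f' ξ‖ ≤ K * ‖f ξ‖ + ε)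
    (hx : x ∈ Icc a b) (hfx : ‖f x‖ ≤ δ) {η : ℝ} (hη : η ∈ Icc a b) (hxη : x ≤ η) :
    ‖f η‖ ≤ gronwallBound δ K ε (η - x) := by
  have hsub : Icc x η ⊆ Icc a b := Icc_subset_Icc hx.1 hη.2
  refine norm_le_gronwallBound_of_norm_deriv_right_le
    (fun ξ hξ => (hf ξ (hsub hξ)).continuousWithinAt.mono hsub) (fun ξ hξ => ?_) hfx
    (fun ξ hξ => bound ξ (hsub (Ico_subset_Icc_self hξ))) η ⟨hxη, le_rfl⟩
  have hξ' := hsub (Ico_subset_Icc_self hξ)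
  exact (hf ξ hξ').mono_of_mem_nhdsWithin (Icc_mem_nhdsGE_of_mem ⟨hξ'.1, hξ.2.trans_le hη.2⟩)

theorem norm_le_gronwallBound_of_hasDerivWithinAt_Icc
    (hf : ∀ ξ ∈ Icc a b, HasDerivWithinAt f (f' ξ) (Icc a b) ξ)
    (bound : ∀ ξ ∈ Icc a b, ‖f' ξ‖ ≤ K * ‖f ξ‖ + ε)
    (hx : x ∈ Icc a b) (hfx : ‖f x‖ ≤ δ) :
    ∀ η ∈ Icc a b, ‖f η‖ ≤ gronwallBound δ K ε |η - x| := by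
  intro η hη
  rcases le_total x η with hxη | hηx
  · rw [abs_of_nonneg (sub_nonneg.2 hxη)]
    exact norm_le_gronwallBound_of_hasDerivWithinAt_Icc_of_le hf bound hx hfx hη hxη
  -- backwards in time: the forward estimate for `ξ ↦ f (-ξ)` on `[-b, -a]`
  have hneg : ∀ ξ ∈ Icc (-b) (-a), -ξ ∈ Icc a b := fun ξ hξ => ⟨le_neg.1 hξ.2, neg_le.1 hξ.1⟩
  have hrev := norm_le_gronwallBound_of_hasDerivWithinAt_Icc_of_le
    (f := fun ξ => f (-ξ)) (f' := fun ξ => -f' (-ξ)) (x := -x)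
    (fun ξ hξ => by
      simpa [Function.comp_def] using (hf (-ξ) (hneg ξ hξ)).scomp ξ (hasDerivWithinAt_neg ξ (Icc (-b) (-a))) hneg)
    (fun ξ hξ => by simpa using bound (-ξ) (hneg ξ hξ))
    ⟨neg_le_neg hx.2, neg_le_neg hx.1⟩ (by simpa using hfx) ⟨neg_le_neg hη.2, neg_le_neg hη.1⟩
    (neg_le_neg hηx)
  simpa [abs_of_nonpos (sub_nonpos.2 hηx), neg_add_eq_sub] using hrev

end Gronwall

theorem abs_sub_le_of_hasDerivAt_of_abs_le {g g' : ℝ → ℝ} {C : ℝ}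
    (hg : ∀ u, HasDerivAt g (g' u) u) (hC : ∀ u, |g' u| ≤ C) (u v : ℝ) :
    |g u - g v| ≤ C * |u - v| :=
  Convex.norm_image_sub_le_of_norm_hasDerivWithin_le (fun τ _ => (hg τ).hasDerivWithinAt)
    (fun τ _ => hC τ) convex_univ (mem_univ v) (mem_univ u)

theorem abs_one_div_sub_one_div_le {Λ p q : ℝ} (hΛ : 0 < Λ) (hp : Λ ≤ |p|) (hq : Λ ≤ |q|) :
    |1 / p - 1 / q| ≤ |p - q| / Λ ^ 2 := by
  have hp0 : p ≠ 0 := abs_pos.1 (hΛ.trans_le hp)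
  have hq0 : q ≠ 0 := abs_pos.1 (hΛ.trans_le hq)
  rw [div_sub_div _ _ hp0 hq0, abs_div, abs_mul, one_mul, mul_one, abs_sub_comm, sq]
  gcongr

theorem abs_one_div_sub_one_div_add_le {g g' p : ℝ → ℝ} {Λ C Cp : ℝ} (hΛ : 0 < Λ)
    (hg : ∀ u, HasDerivAt g (g' u) u) (hg' : ∀ u, |g' u| ≤ C) (hp : ∀ u, |p u| ≤ Cp)
    (hlow : ∀ u, Λ ≤ |g u|) (hlow' : ∀ u, Λ ≤ |g u + p u|) (u v : ℝ) :
    |1 / g u - 1 / (g v + p v)| ≤ C / Λ ^ 2 * |u - v| + Cp / Λ ^ 2 := by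
  have hnum : |g u - (g v + p v)| ≤ C * |u - v| + Cp :=
    calc |g u - (g v + p v)| ≤ |g u - g v| + |p v| := by
          rw [← sub_sub]; exact abs_sub _ _
      _ ≤ C * |u - v| + Cp := add_le_add (abs_sub_le_of_hasDerivAt_of_abs_le hg hg' u v) (hp v)
  calc |1 / g u - 1 / (g v + p v)| ≤ |g u - (g v + p v)| / Λ ^ 2 :=
        abs_one_div_sub_one_div_le hΛ (hlow u) (hlow' v)
    _ ≤ (C * |u - v| + Cp) / Λ ^ 2 := by gcongr
    _ = C / Λ ^ 2 * |u - v| + Cp / Λ ^ 2 := by ring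

theorem stmt_12_general (Λ₀ : ℝ) (hΛ₀ : 0 < Λ₀)
    (a ax aT atil : ℝ → ℝ → ℝ) (Ca Cat : ℝ)
    -- `a` is continuously differentiable on `[0,1] × ℝ` with partial derivatives `ax`, `aT`
    (ha_diff : ∀ x ∈ Set.Icc (0:ℝ) 1, ∀ t : ℝ,
      HasDerivWithinAt (fun y => a y t) (ax x t) (Set.Icc 0 1) x ∧
      HasDerivAt (fun τ => a x τ) (aT x t) t)
    -- `Ca` bounds the `BC¹` norm `sup (|a| + |∂ₓa| + |∂ₜa|)` of `a`
    (hCa : ∀ x ∈ Set.Icc (0:ℝ) 1, ∀ t : ℝ, |a x t| + |ax x t| + |aT x t| ≤ Ca)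
    (ha_low : ∀ x ∈ Set.Icc (0:ℝ) 1, ∀ t : ℝ, Λ₀ ≤ |a x t|)
    (hCat : ∀ x ∈ Set.Icc (0:ℝ) 1, ∀ t : ℝ, |atil x t| ≤ Cat)
    (hpert_low : ∀ x ∈ Set.Icc (0:ℝ) 1, ∀ t : ℝ, Λ₀ ≤ |a x t + atil x t|)
    (x t : ℝ) (hx : x ∈ Set.Icc (0:ℝ) 1)
    (ω ωtil : ℝ → ℝ)
    (hω : ∀ ξ ∈ Set.Icc (0:ℝ) 1,
      HasDerivWithinAt ω (1 / a ξ (ω ξ)) (Set.Icc 0 1) ξ)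
    (hωtil : ∀ ξ ∈ Set.Icc (0:ℝ) 1,
      HasDerivWithinAt ωtil (1 / (a ξ (ωtil ξ) + atil ξ (ωtil ξ))) (Set.Icc 0 1) ξ)
    (hωx : ω x = t) (hωtilx : ωtil x = t) :
    ∀ η ∈ Set.Icc (0:ℝ) 1,
      |ω η - ωtil η| ≤ (1 / Λ₀ ^ 2) * Cat * Real.exp (|η - x| * Ca / Λ₀ ^ 2) := by
  intro η hη
  have hCa0 : 0 ≤ Ca := by
    linarith [hCa x hx t, abs_nonneg (a x t), abs_nonneg (ax x t), abs_nonneg (aT x t)]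
  have hCat0 : 0 ≤ Cat := (abs_nonneg _).trans (hCat x hx t)
  have hspeed : ∀ ξ ∈ Icc (0:ℝ) 1, |1 / a ξ (ω ξ) - 1 / (a ξ (ωtil ξ) + atil ξ (ωtil ξ))| ≤
      Ca / Λ₀ ^ 2 * |ω ξ - ωtil ξ| + Cat / Λ₀ ^ 2 := fun ξ hξ =>
    abs_one_div_sub_one_div_add_le hΛ₀ (fun τ => (ha_diff ξ hξ τ).2)
      (fun τ => by linarith [hCa ξ hξ τ, abs_nonneg (a ξ τ), abs_nonneg (ax ξ τ)])
      (hCat ξ hξ) (ha_low ξ hξ) (hpert_low ξ hξ) _ _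
  have hgron := norm_le_gronwallBound_of_hasDerivWithinAt_Icc (f := fun ξ => ω ξ - ωtil ξ)
    (fun ξ hξ => (hω ξ hξ).sub (hωtil ξ hξ)) hspeed hx (δ := 0) (by simp [hωx, hωtilx]) η hη
  have hdist : |η - x| ≤ 1 := abs_sub_le_iff.2 ⟨by linarith [hη.2, hx.1], by linarith [hη.1, hx.2]⟩
  calc |ω η - ωtil η| ≤ gronwallBound 0 (Ca / Λ₀ ^ 2) (Cat / Λ₀ ^ 2) |η - x| := hgron
    _ ≤ Cat / Λ₀ ^ 2 * |η - x| * exp (Ca / Λ₀ ^ 2 * |η - x|) :=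
        gronwallBound_zero_le (by positivity) (by positivity) _
    _ ≤ Cat / Λ₀ ^ 2 * 1 * exp (Ca / Λ₀ ^ 2 * |η - x|) := by gcongr
    _ = (1 / Λ₀ ^ 2) * Cat * Real.exp (|η - x| * Ca / Λ₀ ^ 2) := by ring_nf

theorem stmt_12 (Λ₀ : ℝ) (hΛ₀ : 0 < Λ₀)
    (a ax aT atil : ℝ → ℝ → ℝ) (Ca Cat : ℝ)
    -- `a` is continuously differentiable on `[0,1] × ℝ` with partial derivatives `ax`, `aT`
    (ha_diff : ∀ x ∈ Set.Icc (0:ℝ) 1, ∀ t : ℝ,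
      HasDerivWithinAt (fun y => a y t) (ax x t) (Set.Icc 0 1) x ∧
      HasDerivAt (fun τ => a x τ) (aT x t) t)
    (ha_cont : ContinuousOn (fun q : ℝ × ℝ => a q.1 q.2) (Set.Icc 0 1 ×ˢ Set.univ))
    (hax_cont : ContinuousOn (fun q : ℝ × ℝ => ax q.1 q.2) (Set.Icc 0 1 ×ˢ Set.univ))
    (haT_cont : ContinuousOn (fun q : ℝ × ℝ => aT q.1 q.2) (Set.Icc 0 1 ×ˢ Set.univ))
    -- `Ca` bounds the `BC¹` norm `sup (|a| + |∂ₓa| + |∂ₜa|)` of `a`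
    (hCa : ∀ x ∈ Set.Icc (0:ℝ) 1, ∀ t : ℝ, |a x t| + |ax x t| + |aT x t| ≤ Ca)
    (ha_low : ∀ x ∈ Set.Icc (0:ℝ) 1, ∀ t : ℝ, Λ₀ ≤ |a x t|)
    -- the perturbation `atil` is continuous and bounded by `Cat`
    (hatil_cont : ContinuousOn (fun q : ℝ × ℝ => atil q.1 q.2) (Set.Icc 0 1 ×ˢ Set.univ))
    (hCat : ∀ x ∈ Set.Icc (0:ℝ) 1, ∀ t : ℝ, |atil x t| ≤ Cat)
    (hpert_low : ∀ x ∈ Set.Icc (0:ℝ) 1, ∀ t : ℝ, Λ₀ ≤ |a x t + atil x t|)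
    (x t : ℝ) (hx : x ∈ Set.Icc (0:ℝ) 1)
    (ω ωtil : ℝ → ℝ)
    (hω : ∀ ξ ∈ Set.Icc (0:ℝ) 1,
      HasDerivWithinAt ω (1 / a ξ (ω ξ)) (Set.Icc 0 1) ξ)
    (hωtil : ∀ ξ ∈ Set.Icc (0:ℝ) 1,
      HasDerivWithinAt ωtil (1 / (a ξ (ωtil ξ) + atil ξ (ωtil ξ))) (Set.Icc 0 1) ξ)
    (hωx : ω x = t) (hωtilx : ωtil x = t) :
    ∀ η ∈ Set.Icc (0:ℝ) 1,
      |ω η - ωtil η| ≤ (1 / Λ₀ ^ 2) * Cat * Real.exp (|η - x| * Ca / Λ₀ ^ 2) :=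
  stmt_12_general Λ₀ hΛ₀ a ax aT atil Ca Cat ha_diff hCa ha_low hCat hpert_low x t hx ω ωtil hω
    hωtil hωx hωtilx
end

section
/- Let Λ₀ > 0 and let a : [0,1]×ℝ → ℝ be continuously differentiable with bounded continuous partial derivatives and |a(x,t)| ≥ Λ₀ for all (x,t). For (ξ,x,t) ∈ [0,1]×[0,1]×ℝ let ω(ξ,x,t) be the unique solution of the characteristic equation ∂_ξ ω(ξ,x,t) = 1/a(ξ, ω(ξ,x,t)) with ω(x,x,t) = t. Then for each fixed ξ, x the map t ↦ ω(ξ,x,t) is differentiable with ∂_t ω(ξ,x,t) = exp ∫_ξ^x (∂_t a)(η, ω(η,x,t)) / a(η, ω(η,x,t))² dη, and for each fixed ξ, t the map x ↦ ω(ξ,x,t) is differentiable with ∂_x ω(ξ,x,t) = −(1/a(x,t)) · exp ∫_ξ^x (∂_t a)(η, ω(η,x,t)) / a(η, ω(η,x,t))² dη. -/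
/-!
If `f` and `g` solve `y' = F(ζ, y)` and `F' = ∂_τ F`, Hadamard's lemma writes
`F(ζ, f) - F(ζ, g) = c(ζ) (f - g)` with `c` the mean of `F'` over the segment from `g` to `f`.
So `f - g` solves a linear equation and `f(ξ) - g(ξ) = (f(x) - g(x)) exp ∫_x^ξ c`.
When `f(x) → g(x)`, `c → F'(·, g)` boundedly, and the exponential factor becomes the derivative
in the initial value. Moving the starting point from `x` to `y` changes the value at `x` by
`ω(x, y, t) - ω(y, y, t) ≈ (x - y) F(x, t)` (mean value theorem), which gives the derivative in `x`.
For the characteristics `F = 1/a` and `F' = -∂_t a / a²`.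
-/

open Set Filter Topology MeasureTheory Function

theorem sub_eq_integral_mul_sub {φ φ' : ℝ → ℝ} (hφ : ∀ τ, HasDerivAt φ (φ' τ) τ)
    (hφ' : Continuous φ') (u v : ℝ) :
    φ u - φ v = (∫ σ in (0:ℝ)..1, φ' (v + (u - v) * σ)) * (u - v) := by
  rcases eq_or_ne (u - v) 0 with h | h
  · rw [h, mul_zero, sub_eq_zero.1 h, sub_self]
  · rw [intervalIntegral.integral_comp_add_mul φ' h, mul_zero, mul_one, add_zero, add_sub_cancel,
      intervalIntegral.integral_eq_sub_of_hasDerivAt (fun τ _ => hφ τ)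
        (hφ'.intervalIntegrable _ _), smul_eq_mul]
    field_simp

theorem eq_mul_exp_integral_of_hasDerivWithinAt {a b x ξ : ℝ} {z c : ℝ → ℝ}
    (hc : ContinuousOn c (Icc a b))
    (hz : ∀ ζ ∈ Icc a b, HasDerivWithinAt z (c ζ * z ζ) (Icc a b) ζ)
    (hx : x ∈ Icc a b) (hξ : ξ ∈ Icc a b) :
    z ξ = z x * Real.exp (∫ η in x..ξ, c η) := by
  set I : ℝ → ℝ := fun ζ => ∫ η in x..ζ, c η
  have hI : ∀ ζ ∈ Icc a b, HasDerivWithinAt I (c ζ) (Icc a b) ζ := fun ζ hζ => by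
    have : Fact (ζ ∈ Icc a b) := ⟨hζ⟩
    exact intervalIntegral.integral_hasDerivWithinAt_right
      (hc.mono (uIcc_subset_Icc hx hζ)).intervalIntegrable
      (hc.stronglyMeasurableAtFilter_nhdsWithin measurableSet_Icc ζ) (hc ζ hζ)
  have hw : ∀ ζ ∈ Icc a b,
      HasDerivWithinAt (fun ζ => z ζ * Real.exp (-I ζ)) 0 (Icc a b) ζ := fun ζ hζ => by
    have h : HasDerivWithinAt (fun ζ => z ζ * Real.exp (-I ζ))
        (c ζ * z ζ * Real.exp (-I ζ) + z ζ * (Real.exp (-I ζ) * -c ζ)) (Icc a b) ζ :=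
      (hz ζ hζ).mul (hI ζ hζ).neg.exp
    convert h using 1
    ring
  have hconst := Convex.norm_image_sub_le_of_norm_hasDerivWithin_le hw
    (fun _ _ => (norm_zero (E := ℝ)).le) (convex_Icc a b) hx hξ
  rw [zero_mul, norm_le_zero_iff, sub_eq_zero] at hconst
  have hIx : I x = 0 := intervalIntegral.integral_same
  rw [hIx, neg_zero, Real.exp_zero, mul_one] at hconst
  rw [← hconst, mul_assoc, ← Real.exp_add, neg_add_cancel, Real.exp_zero, mul_one]

theorem exists_mem_uIcc_sub_eq_mul {a b u v : ℝ} {f f' : ℝ → ℝ}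
    (hf : ∀ ζ ∈ Icc a b, HasDerivWithinAt f (f' ζ) (Icc a b) ζ)
    (hu : u ∈ Icc a b) (hv : v ∈ Icc a b) :
    ∃ c ∈ uIcc u v, f v - f u = f' c * (v - u) := by
  wlog huv : u ≤ v generalizing u v
  · obtain ⟨c, hc, h⟩ := this hv hu (le_of_not_ge huv)
    exact ⟨c, uIcc_comm u v ▸ hc, by linear_combination -h⟩
  rcases huv.eq_or_lt with rfl | huv
  · exact ⟨u, left_mem_uIcc, by simp⟩
  have hsub : Icc u v ⊆ Icc a b := Icc_subset_Icc hu.1 hv.2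
  obtain ⟨c, hc, h⟩ := exists_hasDerivAt_eq_slope f f' huv
    (fun ζ hζ => (hf ζ (hsub hζ)).continuousWithinAt.mono hsub)
    (fun ζ hζ => (hf ζ (hsub (Ioo_subset_Icc_self hζ))).hasDerivAt
      (Icc_mem_nhds (hu.1.trans_lt hζ.1) (hζ.2.trans_le hv.2)))
  refine ⟨c, uIcc_of_le huv.le ▸ Ioo_subset_Icc_self hc, ?_⟩
  rw [h, div_mul_cancel₀ _ (sub_ne_zero.2 huv.ne')]

namespace ScalarODE

variable {a b x ξ K M : ℝ} {F F' : ℝ → ℝ → ℝ} {f g : ℝ → ℝ}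

noncomputable def meanSlope (F' : ℝ → ℝ → ℝ) (f g : ℝ → ℝ) (η : ℝ) : ℝ :=
  ∫ σ in (0:ℝ)..1, F' η (g η + (f η - g η) * σ)

theorem sub_eq_meanSlope_mul {η : ℝ} (hF : ∀ τ, HasDerivAt (F η) (F' η τ) τ)
    (hF' : Continuous (F' η)) :
    F η (f η) - F η (g η) = meanSlope F' f g η * (f η - g η) :=
  sub_eq_integral_mul_sub hF hF' _ _

theorem continuousOn_meanSlope {s : Set ℝ} (hF' : ContinuousOn (uncurry F') (s ×ˢ univ))
    (hf : ContinuousOn f s) (hg : ContinuousOn g s) : ContinuousOn (meanSlope F' f g) s := by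
  rw [continuousOn_iff_continuous_domRestrict] at hf hg ⊢
  refine intervalIntegral.continuous_parametric_intervalIntegral_of_continuous'
    (f := fun (η : s) σ => F' η (g η + (f η - g η) * σ)) ?_ 0 1
  refine hF'.comp_continuous (f := fun p : s × ℝ => ((p.1 : ℝ), g p.1 + (f p.1 - g p.1) * p.2))
    ?_ fun p => ⟨p.1.2, mem_univ _⟩
  exact (continuous_subtype_val.comp continuous_fst).prodMk ((hg.comp continuous_fst).add
    (((hf.comp continuous_fst).sub (hg.comp continuous_fst)).mul continuous_snd))

theorem abs_meanSlope_le {s : Set ℝ} (hK : ∀ ζ ∈ s, ∀ τ, |F' ζ τ| ≤ K) {η : ℝ} (hη : η ∈ s) :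
    |meanSlope F' f g η| ≤ K := by
  simpa [meanSlope] using intervalIntegral.norm_integral_le_of_norm_le_const (a := 0) (b := 1)
    (f := fun σ => F' η (g η + (f η - g η) * σ)) fun σ _ => hK η hη _

theorem tendsto_meanSlope {ι : Type*} {l : Filter ι} {f : ι → ℝ → ℝ} {η : ℝ}
    (hF' : Continuous (F' η)) (hf : Tendsto (fun i => f i η) l (𝓝 (g η))) :
    Tendsto (fun i => meanSlope F' (f i) g η) l (𝓝 (F' η (g η))) := by
  have hcont : Continuous fun u => ∫ σ in (0:ℝ)..1, F' η (g η + u * σ) :=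
    intervalIntegral.continuous_parametric_intervalIntegral_of_continuous'
      (f := fun u σ => F' η (g η + u * σ))
      (hF'.comp (continuous_const.add (continuous_fst.mul continuous_snd))) 0 1
  have h := (hcont.tendsto 0).comp (by simpa using hf.sub_const (g η))
  simp only [zero_mul, add_zero, intervalIntegral.integral_const, sub_zero, smul_eq_mul,
    one_mul] at h
  exact h

theorem abs_sub_le_mul_of_solution (hM : ∀ ζ ∈ Icc a b, ∀ τ, |F ζ τ| ≤ M)
    (hf : ∀ ζ ∈ Icc a b, HasDerivWithinAt f (F ζ (f ζ)) (Icc a b) ζ)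
    {y ζ : ℝ} (hy : y ∈ Icc a b) (hζ : ζ ∈ Icc a b) : |f ζ - f y| ≤ M * |ζ - y| :=
  Convex.norm_image_sub_le_of_norm_hasDerivWithin_le (f' := fun ζ => F ζ (f ζ)) hf
    (fun z hz => hM z hz (f z)) (convex_Icc a b) hy hζ

theorem sub_eq_mul_exp_integral_meanSlope
    (hF : ∀ ζ ∈ Icc a b, ∀ τ, HasDerivAt (F ζ) (F' ζ τ) τ)
    (hF' : ContinuousOn (uncurry F') (Icc a b ×ˢ univ))
    (hf : ∀ ζ ∈ Icc a b, HasDerivWithinAt f (F ζ (f ζ)) (Icc a b) ζ)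
    (hg : ∀ ζ ∈ Icc a b, HasDerivWithinAt g (F ζ (g ζ)) (Icc a b) ζ)
    (hx : x ∈ Icc a b) (hξ : ξ ∈ Icc a b) :
    f ξ - g ξ = (f x - g x) * Real.exp (∫ η in x..ξ, meanSlope F' f g η) := by
  refine eq_mul_exp_integral_of_hasDerivWithinAt (z := fun ζ => f ζ - g ζ)
    (continuousOn_meanSlope hF' (fun ζ hζ => (hf ζ hζ).continuousWithinAt)
      (fun ζ hζ => (hg ζ hζ).continuousWithinAt)) (fun ζ hζ => ?_) hx hξ
  rw [← sub_eq_meanSlope_mul (hF ζ hζ) (continuousOn_univ.1 (hF'.uncurry_left ζ hζ))]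
  exact (hf ζ hζ).sub (hg ζ hζ)

theorem abs_sub_le_abs_sub_mul_exp
    (hF : ∀ ζ ∈ Icc a b, ∀ τ, HasDerivAt (F ζ) (F' ζ τ) τ)
    (hF' : ContinuousOn (uncurry F') (Icc a b ×ˢ univ)) (hK : ∀ ζ ∈ Icc a b, ∀ τ, |F' ζ τ| ≤ K)
    (hf : ∀ ζ ∈ Icc a b, HasDerivWithinAt f (F ζ (f ζ)) (Icc a b) ζ)
    (hg : ∀ ζ ∈ Icc a b, HasDerivWithinAt g (F ζ (g ζ)) (Icc a b) ζ)
    (hx : x ∈ Icc a b) (hξ : ξ ∈ Icc a b) :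
    |f ξ - g ξ| ≤ |f x - g x| * Real.exp (K * |ξ - x|) := by
  rw [sub_eq_mul_exp_integral_meanSlope hF hF' hf hg hx hξ, abs_mul, Real.abs_exp]
  have hint : |∫ η in x..ξ, meanSlope F' f g η| ≤ K * |ξ - x| := by
    simpa using intervalIntegral.norm_integral_le_of_norm_le_const (f := meanSlope F' f g)
      fun η hη => abs_meanSlope_le hK (uIcc_subset_Icc hx hξ (uIoc_subset_uIcc hη))
  gcongr
  exact (le_abs_self _).trans hint

/-- `E i` is a difference quotient of the flow in the value at `x`; its limit solves the variational
equation `v' = F'(ζ, g ζ) v`, `v x = 1`. -/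
theorem exists_sub_eq_mul_tendsto_exp_integral {ι : Type*} {l : Filter ι}
    [l.IsCountablyGenerated] {f : ι → ℝ → ℝ}
    (hF : ∀ ζ ∈ Icc a b, ∀ τ, HasDerivAt (F ζ) (F' ζ τ) τ)
    (hF' : ContinuousOn (uncurry F') (Icc a b ×ˢ univ)) (hK : ∀ ζ ∈ Icc a b, ∀ τ, |F' ζ τ| ≤ K)
    (hf : ∀ᶠ i in l, ∀ ζ ∈ Icc a b, HasDerivWithinAt (f i) (F ζ (f i ζ)) (Icc a b) ζ)
    (hg : ∀ ζ ∈ Icc a b, HasDerivWithinAt g (F ζ (g ζ)) (Icc a b) ζ)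
    (hfx : Tendsto (fun i => f i x) l (𝓝 (g x))) (hx : x ∈ Icc a b) (hξ : ξ ∈ Icc a b) :
    ∃ E : ι → ℝ, Tendsto E l (𝓝 (Real.exp (∫ η in x..ξ, F' η (g η)))) ∧
      ∀ᶠ i in l, f i ξ - g ξ = (f i x - g x) * E i := by
  refine ⟨fun i => Real.exp (∫ η in x..ξ, meanSlope F' (f i) g η), ?_,
    hf.mono fun i hfi => sub_eq_mul_exp_integral_meanSlope hF hF' hfi hg hx hξ⟩
  have hsub : uIoc x ξ ⊆ Icc a b := (uIoc_subset_uIcc).trans (uIcc_subset_Icc hx hξ)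
  have hlim : ∀ η ∈ Icc a b, Tendsto (fun i => f i η) l (𝓝 (g η)) := fun η hη => by
    rw [tendsto_iff_norm_sub_tendsto_zero]
    refine squeeze_zero_norm' (hf.mono fun i hfi => ?_)
      (by simpa using ((hfx.sub_const (g x)).abs.mul_const (Real.exp (K * |η - x|))))
    rw [norm_norm]
    exact abs_sub_le_abs_sub_mul_exp hF hF' hK hfi hg hx hη
  refine (Real.continuous_exp.tendsto _).comp
    (intervalIntegral.tendsto_integral_filter_of_dominated_convergence (fun _ => K) ?_ ?_
      intervalIntegrable_const ?_)
  · exact hf.mono fun i hfi => ((continuousOn_meanSlope hF'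
      (fun ζ hζ => (hfi ζ hζ).continuousWithinAt) (fun ζ hζ => (hg ζ hζ).continuousWithinAt)).mono
      hsub).aestronglyMeasurable measurableSet_uIoc
  · exact Eventually.of_forall fun i => ae_of_all _ fun η hη => abs_meanSlope_le hK (hsub hη)
  · exact ae_of_all _ fun η hη => tendsto_meanSlope
      (continuousOn_univ.1 (hF'.uncurry_left η (hsub hη))) (hlim η (hsub hη))

theorem tendsto_solution_apply_of_tendsto {ι : Type*} {l : Filter ι} {f : ℝ → ℝ → ℝ} {t : ℝ}
    {y c : ι → ℝ}
    (hM : ∀ ζ ∈ Icc a b, ∀ τ, |F ζ τ| ≤ M)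
    (hf : ∀ y ∈ Icc a b, ∀ ζ ∈ Icc a b, HasDerivWithinAt (f y) (F ζ (f y ζ)) (Icc a b) ζ)
    (hinit : ∀ y ∈ Icc a b, f y y = t) (hy : Tendsto y l (𝓝 x)) (hc : Tendsto c l (𝓝 x))
    (hmem : ∀ᶠ i in l, y i ∈ Icc a b ∧ c i ∈ Icc a b) :
    Tendsto (fun i => f (y i) (c i)) l (𝓝 t) := by
  rw [tendsto_iff_norm_sub_tendsto_zero]
  refine squeeze_zero_norm' (hmem.mono fun i ⟨hyi, hci⟩ => ?_)
    (by simpa using ((hc.sub hy).abs.const_mul M))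
  rw [norm_norm, ← hinit (y i) hyi]
  exact abs_sub_le_mul_of_solution hM (hf (y i) hyi) hyi hci

theorem tendsto_sub_div_sub_start {f : ℝ → ℝ → ℝ} {t : ℝ}
    (hFc : ContinuousWithinAt (uncurry F) (Icc a b ×ˢ univ) (x, t))
    (hM : ∀ ζ ∈ Icc a b, ∀ τ, |F ζ τ| ≤ M)
    (hf : ∀ y ∈ Icc a b, ∀ ζ ∈ Icc a b, HasDerivWithinAt (f y) (F ζ (f y ζ)) (Icc a b) ζ)
    (hinit : ∀ y ∈ Icc a b, f y y = t) (hx : x ∈ Icc a b) :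
    Tendsto (fun y => (f y x - t) / (x - y)) (𝓝[Icc a b \ {x}] x) (𝓝 (F x t)) := by
  have hmvt : ∀ y ∈ Icc a b, ∃ c ∈ uIcc y x, f y x - t = F c (f y c) * (x - y) := fun y hy =>
    hinit y hy ▸ exists_mem_uIcc_sub_eq_mul (hf y hy) hy hx
  choose! c hc hceq using hmvt
  have hmem : ∀ᶠ y in 𝓝[Icc a b \ {x}] x, y ∈ Icc a b \ {x} := self_mem_nhdsWithin
  have hy : Tendsto (fun y => y) (𝓝[Icc a b \ {x}] x) (𝓝 x) := nhdsWithin_le_nhds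
  have hcx : Tendsto c (𝓝[Icc a b \ {x}] x) (𝓝 x) := by
    rw [tendsto_iff_norm_sub_tendsto_zero]
    refine squeeze_zero_norm' (hmem.mono fun y hy => ?_) (by simpa using (hy.sub_const x).abs)
    rw [norm_norm, Real.norm_eq_abs, abs_sub_comm, abs_sub_comm y]
    exact abs_sub_right_of_mem_uIcc (hc y hy.1)
  have hcI : ∀ᶠ y in 𝓝[Icc a b \ {x}] x, y ∈ Icc a b ∧ c y ∈ Icc a b :=
    hmem.mono fun y hy => ⟨hy.1, uIcc_subset_Icc hy.1 hx (hc y hy.1)⟩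
  have hpair : Tendsto (fun y => (c y, f y (c y))) (𝓝[Icc a b \ {x}] x)
      (𝓝[Icc a b ×ˢ univ] (x, t)) :=
    tendsto_nhdsWithin_iff.2
      ⟨hcx.prodMk_nhds (tendsto_solution_apply_of_tendsto hM hf hinit hy hcx hcI),
        hcI.mono fun y hy => ⟨hy.2, mem_univ _⟩⟩
  refine (hFc.tendsto.comp hpair).congr' (hmem.mono fun y hy => ?_)
  show F (c y) (f y (c y)) = (f y x - t) / (x - y)
  rw [hceq y hy.1, mul_div_cancel_right₀ _ (sub_ne_zero.2 (Ne.symm hy.2))]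

theorem hasDerivAt_solution_initial_value {f : ℝ → ℝ → ℝ} {t : ℝ}
    (hF : ∀ ζ ∈ Icc a b, ∀ τ, HasDerivAt (F ζ) (F' ζ τ) τ)
    (hF' : ContinuousOn (uncurry F') (Icc a b ×ˢ univ)) (hK : ∀ ζ ∈ Icc a b, ∀ τ, |F' ζ τ| ≤ K)
    (hf : ∀ s, ∀ ζ ∈ Icc a b, HasDerivWithinAt (f s) (F ζ (f s ζ)) (Icc a b) ζ)
    (hinit : ∀ s, f s x = s) (hx : x ∈ Icc a b) (hξ : ξ ∈ Icc a b) :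
    HasDerivAt (fun s => f s ξ) (Real.exp (∫ η in x..ξ, F' η (f t η))) t := by
  obtain ⟨E, hE, hsub⟩ := exists_sub_eq_mul_tendsto_exp_integral (l := 𝓝[≠] t) hF hF' hK
    (Eventually.of_forall hf) (hf t) (by simp only [hinit]; exact nhdsWithin_le_nhds) hx hξ
  rw [hasDerivAt_iff_tendsto_slope]
  refine hE.congr' ((hsub.and self_mem_nhdsWithin).mono fun s ⟨hs, hst⟩ => ?_)
  rw [slope_def_field, hs, hinit, hinit, mul_div_cancel_left₀ _ (sub_ne_zero.2 hst)]

theorem hasDerivWithinAt_solution_start {f : ℝ → ℝ → ℝ} {t : ℝ}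
    (hF : ∀ ζ ∈ Icc a b, ∀ τ, HasDerivAt (F ζ) (F' ζ τ) τ)
    (hF' : ContinuousOn (uncurry F') (Icc a b ×ˢ univ)) (hK : ∀ ζ ∈ Icc a b, ∀ τ, |F' ζ τ| ≤ K)
    (hFc : ContinuousWithinAt (uncurry F) (Icc a b ×ˢ univ) (x, t))
    (hM : ∀ ζ ∈ Icc a b, ∀ τ, |F ζ τ| ≤ M)
    (hf : ∀ y ∈ Icc a b, ∀ ζ ∈ Icc a b, HasDerivWithinAt (f y) (F ζ (f y ζ)) (Icc a b) ζ)
    (hinit : ∀ y ∈ Icc a b, f y y = t) (hx : x ∈ Icc a b) (hξ : ξ ∈ Icc a b) :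
    HasDerivWithinAt (fun y => f y ξ) (-F x t * Real.exp (∫ η in x..ξ, F' η (f x η)))
      (Icc a b) x := by
  have hmem : ∀ᶠ y in 𝓝[Icc a b \ {x}] x, y ∈ Icc a b \ {x} := self_mem_nhdsWithin
  have hfx : Tendsto (fun y => f y x) (𝓝[Icc a b \ {x}] x) (𝓝 (f x x)) := by
    rw [hinit x hx]
    exact tendsto_solution_apply_of_tendsto (y := id) (c := fun _ => x) hM hf hinit
      nhdsWithin_le_nhds tendsto_const_nhds (hmem.mono fun y hy => ⟨hy.1, hx⟩)
  obtain ⟨E, hE, hsub⟩ := exists_sub_eq_mul_tendsto_exp_integral hF hF' hK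
    (hmem.mono fun y hy => hf y hy.1) (hf x hx) hfx hx hξ
  rw [hasDerivWithinAt_iff_tendsto_slope]
  refine ((tendsto_sub_div_sub_start hFc hM hf hinit hx).neg.mul hE).congr'
    ((hsub.and hmem).mono fun y ⟨hy, hyx⟩ => ?_)
  rw [slope_def_field, hy, hinit x hx, ← neg_sub x y, div_neg, neg_mul, mul_div_right_comm]

end ScalarODE

open ScalarODE

theorem abs_neg_div_sq_le {Λ₀ u v C : ℝ} (hΛ₀ : 0 < Λ₀) (hu : Λ₀ ≤ |u|) (hv : |v| ≤ C) :
    |-v / u ^ 2| ≤ C / Λ₀ ^ 2 := by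
  rw [abs_div, abs_neg, abs_of_nonneg (sq_nonneg u), ← sq_abs u]
  exact div_le_div₀ ((abs_nonneg v).trans hv) hv (by positivity)
    (pow_le_pow_left₀ hΛ₀.le hu 2)

theorem stmt_13_general (Λ₀ : ℝ) (hΛ₀ : 0 < Λ₀)
    (a ax aT : ℝ → ℝ → ℝ) (Ca : ℝ)
    (ha_diff : ∀ x ∈ Set.Icc (0:ℝ) 1, ∀ t : ℝ,
      HasDerivWithinAt (fun y => a y t) (ax x t) (Set.Icc 0 1) x ∧
      HasDerivAt (fun τ => a x τ) (aT x t) t)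
    (ha_cont : ContinuousOn (fun q : ℝ × ℝ => a q.1 q.2) (Set.Icc 0 1 ×ˢ Set.univ))
    (haT_cont : ContinuousOn (fun q : ℝ × ℝ => aT q.1 q.2) (Set.Icc 0 1 ×ˢ Set.univ))
    (hbdd : ∀ x ∈ Set.Icc (0:ℝ) 1, ∀ t : ℝ, |a x t| + |ax x t| + |aT x t| ≤ Ca)
    (ha_low : ∀ x ∈ Set.Icc (0:ℝ) 1, ∀ t : ℝ, Λ₀ ≤ |a x t|)
    (ω : ℝ → ℝ → ℝ → ℝ)
    (hω : ∀ ξ ∈ Set.Icc (0:ℝ) 1, ∀ x ∈ Set.Icc (0:ℝ) 1, ∀ t : ℝ,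
      HasDerivWithinAt (fun ζ => ω ζ x t) (1 / a ξ (ω ξ x t)) (Set.Icc 0 1) ξ)
    (hinit : ∀ x ∈ Set.Icc (0:ℝ) 1, ∀ t : ℝ, ω x x t = t) :
    ∀ ξ ∈ Set.Icc (0:ℝ) 1, ∀ x ∈ Set.Icc (0:ℝ) 1, ∀ t : ℝ,
      HasDerivAt (fun τ => ω ξ x τ)
        (Real.exp (∫ η in ξ..x, aT η (ω η x t) / (a η (ω η x t)) ^ 2)) t ∧
      HasDerivWithinAt (fun y => ω ξ y t)
        (-(1 / a x t) * Real.exp (∫ η in ξ..x, aT η (ω η x t) / (a η (ω η x t)) ^ 2))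
        (Set.Icc 0 1) x := by
  intro ξ hξ x hx t
  have ha0 : ∀ ζ ∈ Icc (0:ℝ) 1, ∀ τ, a ζ τ ≠ 0 := fun ζ hζ τ =>
    abs_pos.1 (hΛ₀.trans_le (ha_low ζ hζ τ))
  have hF : ∀ ζ ∈ Icc (0:ℝ) 1, ∀ τ,
      HasDerivAt (fun τ => 1 / a ζ τ) (-aT ζ τ / a ζ τ ^ 2) τ := fun ζ hζ τ => by
    simpa [one_div, neg_div, Pi.inv_def] using (ha_diff ζ hζ τ).2.inv (ha0 ζ hζ τ)
  have hF' : ContinuousOn (uncurry fun ζ τ => -aT ζ τ / a ζ τ ^ 2) (Icc 0 1 ×ˢ univ) :=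
    haT_cont.neg.div (ha_cont.pow 2) fun q hq => pow_ne_zero 2 (ha0 q.1 hq.1 q.2)
  have hK : ∀ ζ ∈ Icc (0:ℝ) 1, ∀ τ, |-aT ζ τ / a ζ τ ^ 2| ≤ Ca / Λ₀ ^ 2 := fun ζ hζ τ =>
    abs_neg_div_sq_le hΛ₀ (ha_low ζ hζ τ) (by
      linarith [hbdd ζ hζ τ, abs_nonneg (a ζ τ), abs_nonneg (ax ζ τ)])
  have hM : ∀ ζ ∈ Icc (0:ℝ) 1, ∀ τ, |1 / a ζ τ| ≤ Λ₀⁻¹ := fun ζ hζ τ => by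
    rw [abs_div, abs_one, one_div]
    exact inv_anti₀ hΛ₀ (ha_low ζ hζ τ)
  have hFc : ContinuousWithinAt (uncurry fun ζ τ => 1 / a ζ τ) (Icc 0 1 ×ˢ univ) (x, t) :=
    continuousWithinAt_const.div (ha_cont (x, t) ⟨hx, mem_univ t⟩) (ha0 x hx t)
  have hint : ∫ η in ξ..x, aT η (ω η x t) / a η (ω η x t) ^ 2
      = ∫ η in x..ξ, -aT η (ω η x t) / a η (ω η x t) ^ 2 := by
    simp only [neg_div, intervalIntegral.integral_neg, intervalIntegral.integral_symm x ξ]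
  rw [hint]
  exact ⟨hasDerivAt_solution_initial_value (f := fun s ζ => ω ζ x s) hF hF' hK
      (fun s => (hω · · x hx s)) (hinit x hx) hx hξ,
    hasDerivWithinAt_solution_start (f := fun y ζ => ω ζ y t) hF hF' hK hFc hM
      (fun y hy => (hω · · y hy t)) (fun y hy => hinit y hy t) hx hξ⟩

theorem stmt_13 (Λ₀ : ℝ) (hΛ₀ : 0 < Λ₀)
    (a ax aT : ℝ → ℝ → ℝ) (Ca : ℝ)
    (ha_diff : ∀ x ∈ Set.Icc (0:ℝ) 1, ∀ t : ℝ,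
      HasDerivWithinAt (fun y => a y t) (ax x t) (Set.Icc 0 1) x ∧
      HasDerivAt (fun τ => a x τ) (aT x t) t)
    (ha_cont : ContinuousOn (fun q : ℝ × ℝ => a q.1 q.2) (Set.Icc 0 1 ×ˢ Set.univ))
    (hax_cont : ContinuousOn (fun q : ℝ × ℝ => ax q.1 q.2) (Set.Icc 0 1 ×ˢ Set.univ))
    (haT_cont : ContinuousOn (fun q : ℝ × ℝ => aT q.1 q.2) (Set.Icc 0 1 ×ˢ Set.univ))
    (hbdd : ∀ x ∈ Set.Icc (0:ℝ) 1, ∀ t : ℝ, |a x t| + |ax x t| + |aT x t| ≤ Ca)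
    (ha_low : ∀ x ∈ Set.Icc (0:ℝ) 1, ∀ t : ℝ, Λ₀ ≤ |a x t|)
    (ω : ℝ → ℝ → ℝ → ℝ)
    (hω : ∀ ξ ∈ Set.Icc (0:ℝ) 1, ∀ x ∈ Set.Icc (0:ℝ) 1, ∀ t : ℝ,
      HasDerivWithinAt (fun ζ => ω ζ x t) (1 / a ξ (ω ξ x t)) (Set.Icc 0 1) ξ)
    (hinit : ∀ x ∈ Set.Icc (0:ℝ) 1, ∀ t : ℝ, ω x x t = t) :
    ∀ ξ ∈ Set.Icc (0:ℝ) 1, ∀ x ∈ Set.Icc (0:ℝ) 1, ∀ t : ℝ,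
      HasDerivAt (fun τ => ω ξ x τ)
        (Real.exp (∫ η in ξ..x, aT η (ω η x t) / (a η (ω η x t)) ^ 2)) t ∧
      HasDerivWithinAt (fun y => ω ξ y t)
        (-(1 / a x t) * Real.exp (∫ η in ξ..x, aT η (ω η x t) / (a η (ω η x t)) ^ 2))
        (Set.Icc 0 1) x :=
  stmt_13_general Λ₀ hΛ₀ a ax aT Ca ha_diff ha_cont haT_cont hbdd ha_low ω hω hinit
end

section
/- For all real numbers λ and μ, every continuously differentiable pair (v₁, v₂) : [0,1] → ℂ² satisfying v₁′(x) = (λ − μ)v₁(x) − v₂(x) and v₂′(x) = μ v₂(x) for all x ∈ [0,1], together with the boundary conditions v₁(0) = 0 and v₁(1) = v₂(1), is identically zero. In other words, the eigenvalue problem has no real eigenvalues. -/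
/-!
The second equation gives `v₂ x = c e^{μx}` with `c = v₂ 0`. Variation of constants in the first,
with `v₁ 0 = 0`, gives `e^{-(λ-μ)x} v₁ x = -c ∫₀ˣ e^{(2μ-λ)s} ds`. At `x = 1` the boundary condition
`v₁ 1 = v₂ 1` becomes `c (e^{2μ-λ} + ∫₀¹ e^{(2μ-λ)s} ds) = 0`; for real `λ, μ` the factor is a positive
real number, so `c = 0`, and then `v₁ = v₂ = 0`.
-/

open Set Complex

theorem eq_left_of_hasDerivWithinAt_Icc_zero {E : Type*} [NormedAddCommGroup E] [NormedSpace ℝ E]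
    {a b : ℝ} {f : ℝ → E} (hf : ∀ x ∈ Icc a b, HasDerivWithinAt f 0 (Icc a b) x) :
    ∀ x ∈ Icc a b, f x = f a :=
  constant_of_has_deriv_right_zero (fun x hx => (hf x hx).continuousWithinAt) fun x hx =>
    (hf x (Ico_subset_Icc_self hx)).mono_of_mem_nhdsWithin (Icc_mem_nhdsGE_of_mem hx)

theorem hasDerivAt_cexp_mul_ofReal (k : ℂ) (x : ℝ) :
    HasDerivAt (fun x : ℝ => exp (k * x)) (k * exp (k * x)) x := by
  simpa [mul_comm] using ((hasDerivAt_id x).ofReal_comp.const_mul k).cexp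

theorem eq_exp_mul_of_hasDerivWithinAt_mul {b : ℝ} {k : ℂ} {v : ℝ → ℂ}
    (hv : ∀ x ∈ Icc 0 b, HasDerivWithinAt v (k * v x) (Icc 0 b) x) :
    ∀ x ∈ Icc 0 b, v x = exp (k * x) * v 0 := by
  have hconst := eq_left_of_hasDerivWithinAt_Icc_zero (f := fun x : ℝ => exp (-k * x) * v x)
    fun x hx => by
      refine ((hasDerivAt_cexp_mul_ofReal (-k) x).hasDerivWithinAt.mul (hv x hx)).congr_deriv ?_
      ring
  intro x hx
  have hx' : exp (-k * x) * v x = v 0 := by simpa using hconst x hx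
  rw [← hx', ← mul_assoc, ← Complex.exp_add]
  simp

theorem exp_neg_mul_eq_neg_mul_integral {b α β : ℝ} {c : ℂ} {v : ℝ → ℂ}
    (hv : ∀ x ∈ Icc 0 b, HasDerivWithinAt v (α * v x - c * exp (β * x)) (Icc 0 b) x)
    (h0 : v 0 = 0) :
    ∀ x ∈ Icc 0 b, exp (-α * x) * v x = -c * ↑(∫ s in (0:ℝ)..x, Real.exp ((β - α) * s)) := by
  have hint (x : ℝ) :
      HasDerivAt (fun x : ℝ => ((∫ s in (0:ℝ)..x, Real.exp ((β - α) * s) : ℝ) : ℂ))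
        (exp ((β - α : ℝ) * x)) x := by
    simpa [ofReal_exp] using
      ((Continuous.integral_hasStrictDerivAt (f := fun s => Real.exp ((β - α) * s))
        (by fun_prop) 0 x).hasDerivAt).ofReal_comp
  have hconst := eq_left_of_hasDerivWithinAt_Icc_zero
    (f := fun x : ℝ => exp (-α * x) * v x + c * ↑(∫ s in (0:ℝ)..x, Real.exp ((β - α) * s)))
    fun x hx => by
      refine (((hasDerivAt_cexp_mul_ofReal (-α) x).hasDerivWithinAt.mul (hv x hx)).add
        ((hint x).const_mul c).hasDerivWithinAt).congr_deriv ?_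
      have hexp : exp (-α * x) * exp (β * x) = exp ((β - α : ℝ) * x) := by
        rw [← Complex.exp_add]
        push_cast
        ring_nf
      linear_combination -c * hexp
  intro x hx
  linear_combination (by simpa [h0] using hconst x hx :
    exp (-α * x) * v x + c * ↑(∫ s in (0:ℝ)..x, Real.exp ((β - α) * s)) = 0)

theorem exp_add_integral_exp_ne_zero (t : ℝ) {b : ℝ} (hb : 0 ≤ b) :
    exp (t * b) + ↑(∫ s in (0:ℝ)..b, Real.exp (t * s)) ≠ 0 := by
  rw [← ofReal_mul, ← ofReal_exp, ← ofReal_add, ofReal_ne_zero]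
  exact (add_pos_of_pos_of_nonneg (Real.exp_pos _)
    (intervalIntegral.integral_nonneg hb fun _ _ => (Real.exp_pos _).le)).ne'

theorem stmt_14 (lam mu : ℝ) (v₁ v₂ : ℝ → ℂ)
    (hv₁ : ∀ x ∈ Set.Icc (0:ℝ) 1,
      HasDerivWithinAt v₁ (((lam : ℂ) - (mu : ℂ)) * v₁ x - v₂ x) (Set.Icc 0 1) x)
    (hv₂ : ∀ x ∈ Set.Icc (0:ℝ) 1,
      HasDerivWithinAt v₂ ((mu : ℂ) * v₂ x) (Set.Icc 0 1) x)
    (h0 : v₁ 0 = 0) (h1 : v₁ 1 = v₂ 1) :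
    ∀ x ∈ Set.Icc (0:ℝ) 1, v₁ x = 0 ∧ v₂ x = 0 := by
  have hv₂_eq := eq_exp_mul_of_hasDerivWithinAt_mul hv₂
  have hv₁_eq := exp_neg_mul_eq_neg_mul_integral (α := lam - mu) (β := mu) (c := v₂ 0)
    (fun x hx => by simpa only [hv₂_eq x hx, ofReal_sub, mul_comm (v₂ 0)] using hv₁ x hx) h0
  have hc : v₂ 0 = 0 := by
    have h := hv₁_eq 1 (right_mem_Icc.2 zero_le_one)
    rw [h1, hv₂_eq 1 (right_mem_Icc.2 zero_le_one)] at h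
    have hexp : exp (-↑(lam - mu) * (1 : ℝ)) * exp (mu * (1 : ℝ))
        = exp ((mu - (lam - mu) : ℝ) * (1 : ℝ)) := by
      rw [← Complex.exp_add]
      push_cast
      ring_nf
    refine (mul_eq_zero.1 (?_ : v₂ 0 * _ = 0)).resolve_right
      (exp_add_integral_exp_ne_zero (mu - (lam - mu)) zero_le_one)
    linear_combination h - v₂ 0 * hexp
  intro x hx
  have hv₁x := hv₁_eq x hx
  rw [hc, neg_zero, zero_mul] at hv₁x
  exact ⟨(mul_eq_zero.1 hv₁x).resolve_left (exp_ne_zero _), by rw [hv₂_eq x hx, hc, mul_zero]⟩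
end

section
/- For every ξ > 0 one has e^{2ξ} > (1 − ξ)², and the set of ξ > 0 satisfying the characteristic equation sin √(e^{2ξ} − (1 − ξ)²) = −√(1 − e^{−2ξ}(1 − ξ)²) is infinite and unbounded above; equivalently, there exists a strictly increasing sequence 0 < ξ₀ < ξ₁ < ξ₂ < ⋯ of solutions tending to +∞. -/
/-! Since `e^ξ ≥ 1 + ξ`, one has `e^{2ξ} − (1 − ξ)² ≥ 4ξ`, so the argument
`g(ξ) = √(e^{2ξ} − (1 − ξ)²)` of the sine is positive for `ξ > 0`, continuous and tends to `+∞`.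
Hence `sin (g ξ)` takes the values `1` and `−1` at arbitrarily large `ξ`, while the right-hand
side lies in `(−1, 0]` for `ξ ≠ 1`. The difference of the two sides therefore changes sign on
every half-line, and the intermediate value theorem yields arbitrarily large solutions. -/

open Real Filter Set

theorem Filter.Frequently.exists_strictMono_tendsto_atTop {α : Type*} [LinearOrder α]
    [NoMaxOrder α] [(atTop : Filter α).IsCountablyGenerated] {p : α → Prop}
    (h : ∃ᶠ x in atTop, p x) :
    ∃ f : ℕ → α, StrictMono f ∧ (∀ k, p (f k)) ∧ Tendsto f atTop atTop := by
  obtain ⟨u, hu, hpu⟩ := exists_seq_forall_of_frequently h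
  obtain ⟨φ, hφ, huφ⟩ := strictMono_subseq_of_tendsto_atTop hu
  exact ⟨u ∘ φ, huφ, fun k => hpu (φ k), hu.comp hφ.tendsto_atTop⟩

theorem Continuous.frequently_eq_of_frequently_le_of_frequently_ge {α δ : Type*}
    [ConditionallyCompleteLinearOrder α] [TopologicalSpace α] [OrderTopology α]
    [DenselyOrdered α] [LinearOrder δ] [TopologicalSpace δ] [OrderClosedTopology δ]
    {f : α → δ} (hf : Continuous f) {c : δ} (hge : ∃ᶠ x in atTop, c ≤ f x)
    (hle : ∃ᶠ x in atTop, f x ≤ c) : ∃ᶠ x in atTop, f x = c := by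
  rw [frequently_atTop] at hge hle ⊢
  intro a
  obtain ⟨x, hax, hx⟩ := hge a
  obtain ⟨y, hxy, hy⟩ := hle x
  obtain ⟨z, hz, hfz⟩ := intermediate_value_Icc' hxy hf.continuousOn ⟨hy, hx⟩
  exact ⟨z, hax.trans hz.1, hfz⟩

theorem Function.Periodic.frequently_comp_eq {p g : ℝ → ℝ} {T : ℝ} (hp : Function.Periodic p T)
    (hT : 0 < T) (hg : Continuous g) (hg_top : Tendsto g atTop atTop) (c : ℝ) :
    ∃ᶠ x in atTop, p (g x) = p c := by
  rw [frequently_atTop]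
  intro a
  obtain ⟨n, hn⟩ := exists_nat_gt ((g a - c) / T)
  have hgt : g a ≤ c + n * T := by
    rw [div_lt_iff₀ hT] at hn
    linarith
  obtain ⟨x, hax, hgx⟩ := intermediate_value_Ici hg.continuousOn hg_top hgt
  exact ⟨x, hax, by rw [hgx, hp.nat_mul n c]⟩

theorem four_mul_le_exp_two_mul_sub_sq {ξ : ℝ} (hξ : 0 ≤ ξ) :
    4 * ξ ≤ exp (2 * ξ) - (1 - ξ) ^ 2 := by
  have h : (1 + ξ) ^ 2 ≤ exp (2 * ξ) := by
    rw [mul_comm, exp_mul, rpow_two]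
    gcongr
    linarith [add_one_le_exp ξ]
  nlinarith

theorem tendsto_sqrt_exp_two_mul_sub_sq :
    Tendsto (fun ξ : ℝ => √(exp (2 * ξ) - (1 - ξ) ^ 2)) atTop atTop := by
  refine tendsto_sqrt_atTop.comp (tendsto_atTop_mono' atTop ?_ (tendsto_id.const_mul_atTop four_pos))
  filter_upwards [eventually_ge_atTop 0] with ξ hξ
  exact four_mul_le_exp_two_mul_sub_sq hξ

theorem sqrt_one_sub_exp_neg_two_mul_mul_sq_lt_one {ξ : ℝ} (hξ : ξ ≠ 1) :
    √(1 - exp (-(2 * ξ)) * (1 - ξ) ^ 2) < 1 := by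
  have : 0 < exp (-(2 * ξ)) * (1 - ξ) ^ 2 := by
    have : 1 - ξ ≠ 0 := sub_ne_zero.mpr hξ.symm
    positivity
  rw [sqrt_lt' one_pos]
  linarith

theorem frequently_sin_sqrt_eq_neg_sqrt :
    ∃ᶠ ξ in atTop, sin √(exp (2 * ξ) - (1 - ξ) ^ 2) =
      -√(1 - exp (-(2 * ξ)) * (1 - ξ) ^ 2) := by
  set g : ℝ → ℝ := fun ξ => √(exp (2 * ξ) - (1 - ξ) ^ 2)
  set s : ℝ → ℝ := fun ξ => √(1 - exp (-(2 * ξ)) * (1 - ξ) ^ 2)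
  have hg : Continuous g := by fun_prop
  have hfreq (c : ℝ) : ∃ᶠ ξ in atTop, sin (g ξ) = sin c :=
    sin_periodic.frequently_comp_eq two_pi_pos hg tendsto_sqrt_exp_two_mul_sub_sq c
  have hpos : ∃ᶠ ξ in atTop, 0 ≤ sin (g ξ) + s ξ := by
    refine (hfreq (π / 2)).mono fun ξ hξ => ?_
    rw [hξ, sin_pi_div_two]
    positivity
  have hneg : ∃ᶠ ξ in atTop, sin (g ξ) + s ξ ≤ 0 := by
    refine ((hfreq (-(π / 2))).and_eventually (eventually_gt_atTop 1)).mono fun ξ hξ => ?_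
    rw [hξ.1, sin_neg, sin_pi_div_two]
    linarith [sqrt_one_sub_exp_neg_two_mul_mul_sq_lt_one hξ.2.ne']
  have hzero := (by fun_prop : Continuous fun ξ => sin (g ξ) + s ξ)
    |>.frequently_eq_of_frequently_le_of_frequently_ge hpos hneg
  exact hzero.mono fun ξ hξ => eq_neg_of_add_eq_zero_left hξ

theorem stmt_17 :
    (∀ ξ : ℝ, 0 < ξ → (1 - ξ) ^ 2 < Real.exp (2 * ξ)) ∧
    ∃ f : ℕ → ℝ, StrictMono f ∧
      (∀ k : ℕ, 0 < f k ∧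
        Real.sin (Real.sqrt (Real.exp (2 * f k) - (1 - f k) ^ 2)) =
          -Real.sqrt (1 - Real.exp (-(2 * f k)) * (1 - f k) ^ 2)) ∧
      Filter.Tendsto f Filter.atTop Filter.atTop := by
  refine ⟨fun ξ hξ => ?_, ?_⟩
  · linarith [four_mul_le_exp_two_mul_sub_sq hξ.le]
  · exact ((eventually_gt_atTop 0).and_frequently frequently_sin_sqrt_eq_neg_sqrt)
      |>.exists_strictMono_tendsto_atTop
end
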